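/- arXiv:1611.01856 — 5 statements merged into one kernel-verified Lean document; each statement's English description precedes it below -/
import Mathlib

section
/- (Distance Duality) K ∩ K' ≠ ∅ if and only if for every pair (p, p') ∈ K × K', either there exists v ∈ V such that d(p, v) ≥ d(p', v), or there exists v' ∈ V' such that d(p', v') ≥ d(p, v'). -/
/-!
If `x ∈ K ∩ K'` and every vertex of `V` were strictly closer to `p` than to `p'` and every
vertex of `V'` strictly closer to `p'` than to `p`, then the open half-spaces
`{y | d(p, y) < d(p', y)}` and `{y | d(p', y) < d(p, y)}`, being convex, would contain `K` and
`K'` respectively, hence both contain `x`, which is absurd.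

Conversely, if `K` and `K'` are disjoint, take a closest pair `(p, p') ∈ K × K'`. Since `p` is
the projection of `p'` onto `K`, the obtuse-angle criterion `⟪p' - p, v - p⟫ ≤ 0` makes every
`v ∈ K` strictly closer to `p` than to `p'`, and symmetrically for `K'`.
-/

open RealInnerProductSpace

section InnerProductSpace

variable {F : Type*} [NormedAddCommGroup F] [InnerProductSpace ℝ F]

theorem convex_setOf_dist_lt_dist (a b : F) : Convex ℝ {y | dist a y < dist b y} := by
  have hset : {y | dist a y < dist b y} = {y | ⟪b - a, y⟫ < (‖b‖ ^ 2 - ‖a‖ ^ 2) / 2} := by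
    ext y
    simp only [Set.mem_ofPred_eq]
    rw [← sq_lt_sq₀ dist_nonneg dist_nonneg, dist_eq_norm, dist_eq_norm, norm_sub_sq_real,
      norm_sub_sq_real, inner_sub_left]
    constructor <;> intro h <;> linarith
  rw [hset]
  exact convex_halfSpace_lt (innerₛₗ ℝ (b - a)).isLinear _

theorem dist_lt_dist_of_isMinOn {K : Set F} (hK : Convex ℝ K) {p q : F} (hp : p ∈ K)
    (hmin : IsMinOn (dist · q) K p) (hpq : p ≠ q) {v : F} (hv : v ∈ K) :
    dist p v < dist q v := by
  have hinf : ‖q - p‖ = ⨅ w : K, ‖q - w‖ := by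
    have : Nonempty K := ⟨⟨p, hp⟩⟩
    refine le_antisymm (le_ciInf fun w => ?_) (ciInf_le ⟨0, ?_⟩ (⟨p, hp⟩ : K))
    · simpa only [dist_eq_norm, norm_sub_rev] using isMinOn_iff.mp hmin w w.2
    · rintro _ ⟨w, rfl⟩
      exact norm_nonneg _
  have hobtuse : ⟪q - p, v - p⟫ ≤ 0 := (norm_eq_iInf_iff_real_inner_le_zero hK hp).mp hinf v hv
  have hqp : 0 < ‖q - p‖ := norm_sub_pos_iff.mpr hpq.symm
  have hexpand : ‖q - v‖ ^ 2 = ‖q - p‖ ^ 2 - 2 * ⟪q - p, v - p⟫ + ‖v - p‖ ^ 2 := by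
    rw [← norm_sub_sq_real, sub_sub_sub_cancel_right]
  rw [← sq_lt_sq₀ dist_nonneg dist_nonneg, dist_eq_norm, dist_eq_norm, norm_sub_rev p v,
    hexpand]
  nlinarith

end InnerProductSpace

theorem IsCompact.exists_isMinOn_dist_pair {E : Type*} [PseudoMetricSpace E] {K K' : Set E}
    (hK : IsCompact K) (hK' : IsCompact K') (hKne : K.Nonempty) (hK'ne : K'.Nonempty) :
    ∃ p ∈ K, ∃ p' ∈ K', IsMinOn (dist · p') K p ∧ IsMinOn (dist · p) K' p' := by
  obtain ⟨⟨p, p'⟩, ⟨hp, hp'⟩, hmin⟩ :=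
    (hK.prod hK').exists_isMinOn (hKne.prod hK'ne) continuous_dist.continuousOn
  refine ⟨p, hp, p', hp', fun q hq => hmin (Set.mk_mem_prod hq hp'), fun q hq =>
    (dist_comm p' p).trans_le ((hmin (Set.mk_mem_prod hp hq)).trans_eq (dist_comm p q))⟩

/-- Distance duality: `K ∩ K' ≠ ∅` iff for every `(p, p') ∈ K × K'`, either some `v ∈ V`
satisfies `d(p,v) ≥ d(p',v)`, or some `v' ∈ V'` satisfies `d(p',v') ≥ d(p,v')`. -/
theorem distance_duality {m : ℕ} (V V' : Finset (EuclideanSpace ℝ (Fin m)))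
    (hV : V.Nonempty) (hV' : V'.Nonempty) :
    (convexHull ℝ (V : Set (EuclideanSpace ℝ (Fin m))) ∩
        convexHull ℝ (V' : Set (EuclideanSpace ℝ (Fin m)))).Nonempty ↔
      ∀ p ∈ convexHull ℝ (V : Set (EuclideanSpace ℝ (Fin m))),
        ∀ p' ∈ convexHull ℝ (V' : Set (EuclideanSpace ℝ (Fin m))),
          (∃ v ∈ V, dist p' v ≤ dist p v) ∨ (∃ v' ∈ V', dist p v' ≤ dist p' v') := by
  constructor
  · rintro ⟨x, hx, hx'⟩ p _ p' _
    by_contra! hcloser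
    have hpx : dist p x < dist p' x :=
      convexHull_min hcloser.1 (convex_setOf_dist_lt_dist p p') hx
    have hp'x : dist p' x < dist p x :=
      convexHull_min hcloser.2 (convex_setOf_dist_lt_dist p' p) hx'
    exact lt_asymm hpx hp'x
  · intro hduality
    obtain ⟨p, hp, p', hp', hmin, hmin'⟩ := IsCompact.exists_isMinOn_dist_pair
      (V.finite_toSet.isCompact_convexHull (𝕜 := ℝ))
      (V'.finite_toSet.isCompact_convexHull (𝕜 := ℝ))
      (hV.to_set.mono (subset_convexHull ℝ _))
      (hV'.to_set.mono (subset_convexHull ℝ _))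
    by_cases hpp : p = p'
    · exact ⟨p, hp, hpp ▸ hp'⟩
    rcases hduality p hp p' hp' with ⟨v, hv, hle⟩ | ⟨v', hv', hle⟩
    · exact absurd hle (dist_lt_dist_of_isMinOn (convex_convexHull ℝ _) hp hmin hpp
        (subset_convexHull ℝ _ hv)).not_ge
    · exact absurd hle (dist_lt_dist_of_isMinOn (convex_convexHull ℝ _) hp' hmin' (Ne.symm hpp)
        (subset_convexHull ℝ _ hv')).not_ge
end

section
/- Let p ∈ K and p' ∈ ℝ^m with p ≠ p', and let H = {x ∈ ℝ^m : ⟨h, x⟩ = a} be the orthogonal bisecting hyperplane of the segment pp', where h = p − p' and a = ½(‖p‖² − ‖p'‖²). Then H intersects K if and only if there exists v ∈ V with d(p, v) ≥ d(p', v). -/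
/-!
Expanding the squared distances, `dist p' v ≤ dist p v` says exactly that `v` lies in the closed
half-space `⟪p - p', ·⟫ ≤ a` bounded by the bisector `H`, while `p` lies in the opposite closed half-space,
since `⟪p - p', p⟫ - a = ‖p - p'‖² / 2`. If every vertex lay strictly beyond `H`, so would their
convex hull; conversely, a vertex `v` on the near side of `H` and the point `p` of the hull on the
far side span a segment in the hull, which the linear functional maps onto an interval containing
`a`.
-/

open RealInnerProductSpace

section ConvexHull

variable {E : Type*} [AddCommGroup E] [Module ℝ E]

theorem exists_mem_convexHull_apply_eq_iff (f : E →ₗ[ℝ] ℝ) {s : Set E} {p : E} {a : ℝ}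
    (hp : p ∈ convexHull ℝ s) (ha : a ≤ f p) :
    (∃ x ∈ convexHull ℝ s, f x = a) ↔ ∃ v ∈ s, f v ≤ a := by
  constructor
  · rintro ⟨x, hx, rfl⟩
    exact (f.concaveOn (convex_convexHull ℝ s)).exists_le_of_mem_convexHull
      (subset_convexHull ℝ s) hx
  · rintro ⟨v, hv, hva⟩
    have ha_mem : a ∈ f.toAffineMap '' segment ℝ v p := by
      rw [image_segment, LinearMap.coe_toAffineMap, segment_eq_Icc (hva.trans ha)]
      exact ⟨hva, ha⟩
    obtain ⟨x, hx, hxa⟩ := ha_mem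
    exact ⟨x, (convex_convexHull ℝ s).segment_subset (subset_convexHull ℝ s hv) hp hx, hxa⟩

end ConvexHull

section Bisector

variable {E : Type*} [NormedAddCommGroup E] [InnerProductSpace ℝ E]

theorem two_mul_inner_sub_sub_half_sub_eq (p p' v : E) :
    2 * (⟪p - p', v⟫ - (1 / 2) * (‖p‖ ^ 2 - ‖p'‖ ^ 2)) = dist p' v ^ 2 - dist p v ^ 2 := by
  rw [dist_eq_norm, dist_eq_norm, norm_sub_sq_real, norm_sub_sq_real, inner_sub_left]
  ring

theorem dist_le_dist_iff_inner_le (p p' v : E) :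
    dist p' v ≤ dist p v ↔ ⟪p - p', v⟫ ≤ (1 / 2) * (‖p‖ ^ 2 - ‖p'‖ ^ 2) := by
  have h := two_mul_inner_sub_sub_half_sub_eq p p' v
  rw [← sq_le_sq₀ dist_nonneg dist_nonneg]
  constructor <;> intro <;> linarith

theorem half_sub_le_inner_sub_self (p p' : E) :
    (1 / 2) * (‖p‖ ^ 2 - ‖p'‖ ^ 2) ≤ ⟪p - p', p⟫ := by
  have h := two_mul_inner_sub_sub_half_sub_eq p p' p
  rw [dist_self] at h
  nlinarith [sq_nonneg (dist p' p)]

end Bisector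

theorem bisector_intersects_hull_iff_pivot_general {m : ℕ} (V : Finset (EuclideanSpace ℝ (Fin m)))
    (p p' : EuclideanSpace ℝ (Fin m))
    (hp : p ∈ convexHull ℝ (V : Set (EuclideanSpace ℝ (Fin m)))) :
    ({x : EuclideanSpace ℝ (Fin m) | ⟪p - p', x⟫ = (1 / 2) * (‖p‖ ^ 2 - ‖p'‖ ^ 2)} ∩
        convexHull ℝ (V : Set (EuclideanSpace ℝ (Fin m)))).Nonempty ↔
      ∃ v ∈ V, dist p' v ≤ dist p v := by
  rw [Set.inter_comm]
  simp_rw [dist_le_dist_iff_inner_le]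
  exact exists_mem_convexHull_apply_eq_iff (innerₛₗ ℝ (p - p')) hp (half_sub_le_inner_sub_self p p')

/-- With `p ∈ K = conv(V)`, `p ≠ p'`, and `H` the orthogonal bisecting hyperplane of the
segment `pp'` (i.e. `H = {x : ⟪p - p', x⟫ = ½(‖p‖² - ‖p'‖²)}`), `H` intersects `K` iff
there exists `v ∈ V` with `d(p,v) ≥ d(p',v)`. -/
theorem bisector_intersects_hull_iff_pivot {m : ℕ} (V : Finset (EuclideanSpace ℝ (Fin m)))
    (hV : V.Nonempty) (p p' : EuclideanSpace ℝ (Fin m))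
    (hp : p ∈ convexHull ℝ (V : Set (EuclideanSpace ℝ (Fin m)))) (hne : p ≠ p') :
    ({x : EuclideanSpace ℝ (Fin m) | ⟪p - p', x⟫ = (1 / 2) * (‖p‖ ^ 2 - ‖p'‖ ^ 2)} ∩
        convexHull ℝ (V : Set (EuclideanSpace ℝ (Fin m)))).Nonempty ↔
      ∃ v ∈ V, dist p' v ≤ dist p v :=
  bisector_intersects_hull_iff_pivot_general V p p' hp
end

section
/- Let p, p', v ∈ ℝ^m with p ≠ p' and suppose v is a p'-pivot for p, i.e., d(p, v) ≥ d(p', v). Then v ≠ p, and the point q on the segment joining p to v that is nearest to p' satisfies d(q, p') < d(p, p'). In particular each pivot step of the Triangle Algorithm strictly decreases the gap between the iterates. -/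
/-! If the gap were not reduced, `p` itself would be a nearest point of the segment `[p, v]` to
`p'`, so by the variational characterization of nearest points in convex sets
`⟪p' - p, v - p⟫ ≤ 0`. Expanding `‖p' - v‖² ≤ ‖p - v‖²` gives instead
`‖p' - p‖² ≤ 2 ⟪p' - p, v - p⟫`, which is positive since `p ≠ p'`. -/

open RealInnerProductSpace

variable {F : Type*} [NormedAddCommGroup F] [InnerProductSpace ℝ F]

theorem norm_sub_sq_le_two_inner_of_dist_le {p p' v : F} (h : dist p' v ≤ dist p v) :
    ‖p' - p‖ ^ 2 ≤ 2 * ⟪p' - p, v - p⟫ := by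
  have hexpand : dist p' v ^ 2 = ‖p' - p‖ ^ 2 - 2 * ⟪p' - p, v - p⟫ + ‖v - p‖ ^ 2 := by
    rw [dist_eq_norm, ← norm_sub_sq_real, sub_sub_sub_cancel_right]
  have hsq : dist p' v ^ 2 ≤ dist p v ^ 2 := pow_le_pow_left₀ dist_nonneg h 2
  rw [hexpand, dist_eq_norm'] at hsq
  linarith

theorem Convex.real_inner_sub_le_zero_of_isMinOn_dist {K : Set F} (hK : Convex ℝ K) {u p : F}
    (hp : p ∈ K) (hmin : IsMinOn (dist · u) K p) {w : F} (hw : w ∈ K) :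
    ⟪u - p, w - p⟫ ≤ 0 := by
  have : Nonempty K := ⟨⟨p, hp⟩⟩
  have hinf : ‖u - p‖ = ⨅ w : K, ‖u - w‖ := by
    refine le_antisymm (le_ciInf fun w ↦ ?_) (ciInf_le ?_ (⟨p, hp⟩ : K))
    · simpa only [dist_eq_norm'] using isMinOn_iff.1 hmin w w.2
    · exact ⟨0, Set.forall_mem_range.2 fun w ↦ norm_nonneg _⟩
  exact (norm_eq_iInf_iff_real_inner_le_zero hK hp).1 hinf w hw

theorem pivot_step_decreases_gap_general {m : ℕ} (p p' v : EuclideanSpace ℝ (Fin m))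
    (hne : p ≠ p') (hpiv : dist p' v ≤ dist p v) (q : EuclideanSpace ℝ (Fin m))
    (hqmin : ∀ r ∈ segment ℝ p v, dist q p' ≤ dist r p') :
    v ≠ p ∧ dist q p' < dist p p' := by
  refine ⟨?_, (hqmin p (left_mem_segment ℝ p v)).lt_of_ne fun hgap ↦ ?_⟩
  · rintro rfl
    exact hne (dist_le_zero.1 (by simpa using hpiv)).symm
  have hpmin : IsMinOn (dist · p') (segment ℝ p v) p :=
    isMinOn_iff.2 fun r hr ↦ hgap ▸ hqmin r hr
  have hinner_nonpos : ⟪p' - p, v - p⟫ ≤ 0 :=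
    (convex_segment p v).real_inner_sub_le_zero_of_isMinOn_dist (left_mem_segment ℝ p v) hpmin
      (right_mem_segment ℝ p v)
  have hgap_pos : 0 < ‖p' - p‖ := norm_pos_iff.2 (sub_ne_zero.2 hne.symm)
  nlinarith [norm_sub_sq_le_two_inner_of_dist_le hpiv]

/-- If `p ≠ p'` and `v` is a `p'`-pivot for `p` (i.e. `d(p,v) ≥ d(p',v)`), then `v ≠ p`,
and the point `q` of the segment joining `p` to `v` nearest to `p'` satisfies
`d(q,p') < d(p,p')`: each pivot step strictly decreases the gap. -/
theorem pivot_step_decreases_gap {m : ℕ} (p p' v : EuclideanSpace ℝ (Fin m))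
    (hne : p ≠ p') (hpiv : dist p' v ≤ dist p v) (q : EuclideanSpace ℝ (Fin m))
    (hq : q ∈ segment ℝ p v) (hqmin : ∀ r ∈ segment ℝ p v, dist q p' ≤ dist r p') :
    v ≠ p ∧ dist q p' < dist p p' :=
  pivot_step_decreases_gap_general p p' v hne hpiv q hqmin
end

section
/- If (p₁, p₁') ∈ K × K' and (p₂, p₂') ∈ K × K' both attain the minimum distance, i.e., d(p₁, p₁') = d(p₂, p₂') = δ* = d(K, K'), then p₁ − p₁' = p₂ − p₂'. Consequently the optimal separating hyperplane direction is unique. -/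
/-!
If `a = p₁ - p₁'` and `b = p₂ - p₂'` both have the minimal length `δ*`, the pair of midpoints is
again in `K × K'` and its difference is the midpoint of `a` and `b`; so that midpoint has length at
least `δ*`, which in a strictly convex space (such as a Euclidean one) forces `a = b`.
-/

open Set

theorem midpoint_sub_midpoint {R E : Type*} [Ring R] [Invertible (2 : R)] [AddCommGroup E]
    [Module R E] (p₁ p₂ q₁ q₂ : E) :
    midpoint R p₁ p₂ - midpoint R q₁ q₂ = midpoint R (p₁ - q₁) (p₂ - q₂) := by
  simp only [midpoint_eq_smul_add, ← smul_sub]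
  abel_nf

section StrictConvexSpace

variable {E : Type*} [NormedAddCommGroup E] [NormedSpace ℝ E] [StrictConvexSpace ℝ E]

theorem eq_of_norm_eq_of_le_norm_midpoint {x y : E} {r : ℝ} (hx : ‖x‖ = r) (hy : ‖y‖ = r)
    (h : r ≤ ‖midpoint ℝ x y‖) : x = y := by
  by_contra hne
  have hlt := (norm_midpoint_lt_iff (hx.trans hy.symm)).2 hne
  rw [one_div, ← invOf_eq_inv, ← midpoint_eq_smul_add, hx] at hlt
  exact hlt.not_ge h

theorem Convex.sub_eq_of_dist_eq_sInf_image2_dist {s t : Set E} (hs : Convex ℝ s)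
    (ht : Convex ℝ t) {p₁ p₂ p₁' p₂' : E} (h₁ : p₁ ∈ s) (h₂ : p₂ ∈ s) (h₁' : p₁' ∈ t)
    (h₂' : p₂' ∈ t) (hd₁ : dist p₁ p₁' = sInf (image2 dist s t))
    (hd₂ : dist p₂ p₂' = sInf (image2 dist s t)) :
    p₁ - p₁' = p₂ - p₂' := by
  have hbdd : BddBelow (image2 dist s t) := ⟨0, forall_mem_image2.2 fun _ _ _ _ ↦ dist_nonneg⟩
  have hle : sInf (image2 dist s t) ≤ dist (midpoint ℝ p₁ p₂) (midpoint ℝ p₁' p₂') :=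
    csInf_le hbdd (mem_image2_of_mem (hs.midpoint_mem h₁ h₂) (ht.midpoint_mem h₁' h₂'))
  refine eq_of_norm_eq_of_le_norm_midpoint (r := sInf (image2 dist s t)) ?_ ?_ ?_
  · rw [← dist_eq_norm, hd₁]
  · rw [← dist_eq_norm, hd₂]
  · rwa [← midpoint_sub_midpoint, ← dist_eq_norm]

end StrictConvexSpace

theorem optimal_direction_unique_general {m : ℕ} (V V' : Finset (EuclideanSpace ℝ (Fin m)))
    (p₁ p₁' p₂ p₂' : EuclideanSpace ℝ (Fin m))
    (h₁ : p₁ ∈ convexHull ℝ (V : Set (EuclideanSpace ℝ (Fin m))))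
    (h₁' : p₁' ∈ convexHull ℝ (V' : Set (EuclideanSpace ℝ (Fin m))))
    (h₂ : p₂ ∈ convexHull ℝ (V : Set (EuclideanSpace ℝ (Fin m))))
    (h₂' : p₂' ∈ convexHull ℝ (V' : Set (EuclideanSpace ℝ (Fin m))))
    (hd₁ : dist p₁ p₁' =
      sInf (Set.image2 dist (convexHull ℝ (V : Set (EuclideanSpace ℝ (Fin m))))
        (convexHull ℝ (V' : Set (EuclideanSpace ℝ (Fin m))))))
    (hd₂ : dist p₂ p₂' =
      sInf (Set.image2 dist (convexHull ℝ (V : Set (EuclideanSpace ℝ (Fin m))))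
        (convexHull ℝ (V' : Set (EuclideanSpace ℝ (Fin m)))))) :
    p₁ - p₁' = p₂ - p₂' :=
  (convex_convexHull ℝ _).sub_eq_of_dist_eq_sInf_image2_dist (convex_convexHull ℝ _) h₁ h₂ h₁' h₂'
    hd₁ hd₂

/-- If `(p₁,p₁')` and `(p₂,p₂')` in `K × K'` both attain the minimum distance
`δ* = d(K,K')`, then `p₁ - p₁' = p₂ - p₂'`: the optimal separating direction is unique. -/
theorem optimal_direction_unique {m : ℕ} (V V' : Finset (EuclideanSpace ℝ (Fin m)))
    (hV : V.Nonempty) (hV' : V'.Nonempty) (p₁ p₁' p₂ p₂' : EuclideanSpace ℝ (Fin m))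
    (h₁ : p₁ ∈ convexHull ℝ (V : Set (EuclideanSpace ℝ (Fin m))))
    (h₁' : p₁' ∈ convexHull ℝ (V' : Set (EuclideanSpace ℝ (Fin m))))
    (h₂ : p₂ ∈ convexHull ℝ (V : Set (EuclideanSpace ℝ (Fin m))))
    (h₂' : p₂' ∈ convexHull ℝ (V' : Set (EuclideanSpace ℝ (Fin m))))
    (hd₁ : dist p₁ p₁' =
      sInf (Set.image2 dist (convexHull ℝ (V : Set (EuclideanSpace ℝ (Fin m))))
        (convexHull ℝ (V' : Set (EuclideanSpace ℝ (Fin m))))))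
    (hd₂ : dist p₂ p₂' =
      sInf (Set.image2 dist (convexHull ℝ (V : Set (EuclideanSpace ℝ (Fin m))))
        (convexHull ℝ (V' : Set (EuclideanSpace ℝ (Fin m)))))) :
    p₁ - p₁' = p₂ - p₂' :=
  optimal_direction_unique_general V V' p₁ p₁' p₂ p₂' h₁ h₁' h₂ h₂' hd₁ hd₂
end

section
/- Let p ∈ ℝ^m and let p' ∈ conv(V) be a witness for the non-membership of p, i.e., d(p', v) < d(p, v) for all v ∈ V. Then p ∉ conv(V) and ½ d(p, p') ≤ d(p, conv(V)) ≤ d(p, p'); that is, the witness approximates the distance from p to conv(V) to within a factor of 2. -/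
/-!
Every vertex `v` is strictly closer to `p'` than to `p`, and the half-space
`{x | dist x p' ≤ dist x p}` is convex, so it contains all of `conv(V)`. For `x ∈ conv(V)` the
triangle inequality then gives `dist p p' ≤ dist p x + dist x p' ≤ 2 * dist p x`. Taking
`x = p` shows `p ∉ conv(V)` (as `p ≠ p'`), and taking the infimum gives the lower bound; the
upper bound holds because `p' ∈ conv(V)`.
-/

open RealInnerProductSpace

section InnerProductSpace

variable {E : Type*} [NormedAddCommGroup E] [InnerProductSpace ℝ E]

theorem convex_setOf_dist_le_dist (a b : E) : Convex ℝ {x : E | dist x a ≤ dist x b} := by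
  -- The difference of the squared distances is affine in `x`.
  have halfSpace : {x : E | dist x a ≤ dist x b} =
      {x : E | ⟪b - a, x⟫ ≤ (‖b‖ ^ 2 - ‖a‖ ^ 2) / 2} := by
    ext x
    simp only [Set.mem_ofPred_eq, dist_eq_norm, ← sq_le_sq₀ (norm_nonneg _) (norm_nonneg _),
      norm_sub_sq_real, inner_sub_left, real_inner_comm x]
    constructor <;> intro h <;> linarith
  rw [halfSpace]
  exact convex_halfSpace_le (innerₛₗ ℝ (b - a)).isLinear _

theorem convexHull_subset_setOf_dist_le_dist {s : Set E} {a b : E}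
    (h : ∀ v ∈ s, dist v a ≤ dist v b) :
    convexHull ℝ s ⊆ {x : E | dist x a ≤ dist x b} :=
  convexHull_min h (convex_setOf_dist_le_dist a b)

end InnerProductSpace

theorem dist_div_two_le_of_dist_le_dist {X : Type*} [PseudoMetricSpace X] {x a b : X}
    (h : dist x a ≤ dist x b) : dist b a / 2 ≤ dist b x := by
  linarith [dist_triangle b x a, dist_comm x b]

theorem witness_approximates_distance_general {m : ℕ} (V : Finset (EuclideanSpace ℝ (Fin m)))
    (p p' : EuclideanSpace ℝ (Fin m))
    (hp' : p' ∈ convexHull ℝ (V : Set (EuclideanSpace ℝ (Fin m))))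
    (hw : ∀ v ∈ V, dist p' v < dist p v) :
    p ∉ convexHull ℝ (V : Set (EuclideanSpace ℝ (Fin m))) ∧
    dist p p' / 2 ≤ Metric.infDist p (convexHull ℝ (V : Set (EuclideanSpace ℝ (Fin m)))) ∧
    Metric.infDist p (convexHull ℝ (V : Set (EuclideanSpace ℝ (Fin m)))) ≤ dist p p' := by
  set C := convexHull ℝ (V : Set (EuclideanSpace ℝ (Fin m)))
  have hull_closer : ∀ x ∈ C, dist p p' / 2 ≤ dist p x := fun x hx =>
    dist_div_two_le_of_dist_le_dist <| convexHull_subset_setOf_dist_le_dist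
      (fun v hv => by simpa only [dist_comm v] using (hw v hv).le) hx
  have p_ne : p ≠ p' := by
    obtain ⟨v, hv⟩ := convexHull_nonempty_iff.mp ⟨p', hp'⟩
    rintro rfl
    exact lt_irrefl _ (hw v hv)
  refine ⟨fun hp => p_ne (dist_le_zero.mp ?_), (Metric.le_infDist ⟨p', hp'⟩).mpr hull_closer,
    Metric.infDist_le_dist_of_mem hp'⟩
  linarith [hull_closer p hp, dist_self p]

/-- If `p' ∈ conv(V)` is a witness for non-membership of `p` (`d(p',v) < d(p,v)` for all
`v ∈ V`), then `p ∉ conv(V)` and `½ d(p,p') ≤ d(p, conv(V)) ≤ d(p,p')`. -/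
theorem witness_approximates_distance {m : ℕ} (V : Finset (EuclideanSpace ℝ (Fin m)))
    (hV : V.Nonempty) (p p' : EuclideanSpace ℝ (Fin m))
    (hp' : p' ∈ convexHull ℝ (V : Set (EuclideanSpace ℝ (Fin m))))
    (hw : ∀ v ∈ V, dist p' v < dist p v) :
    p ∉ convexHull ℝ (V : Set (EuclideanSpace ℝ (Fin m))) ∧
    dist p p' / 2 ≤ Metric.infDist p (convexHull ℝ (V : Set (EuclideanSpace ℝ (Fin m)))) ∧
    Metric.infDist p (convexHull ℝ (V : Set (EuclideanSpace ℝ (Fin m)))) ≤ dist p p' :=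
  witness_approximates_distance_general V p p' hp' hw
end
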